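/- Correctness of Horner-style fast evaluation: let A, B be n×n matrices over a commutative ring R, define M(y) = A·y + B for y ∈ ℕ, and let w be a vector in R^n. Then the algorithm that initializes M ← k·A + B and, for i = k down to 0, sets w ← M·w and M ← M − A, returns M(0)·M(1)⋯M(k)·w. -/
import Mathlib


open Matrix

variable {R : Type*} [CommRing R]

/-- One pass of the Horner-style loop: `hornerLoop A M w j` performs `j`
iterations of "`w ← M·w; M ← M − A`". -/
def hornerLoop {n : ℕ} (A : Matrix (Fin n) (Fin n) R) :
    Matrix (Fin n) (Fin n) R → (Fin n → R) → ℕ → (Fin n → R)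
  | _, w, 0 => w
  | M, w, j + 1 => hornerLoop A (M - A) (M.mulVec w) j

/-- Correctness of Horner-style fast evaluation (Algorithm 2): with
`M(y) = y·A + B`, initializing `M ← k·A + B` and iterating
`w ← M·w; M ← M − A` for `i = k` down to `0` returns
`M(0)·M(1)⋯M(k)·w`. -/
theorem hornerLoop_correct {n : ℕ} (A B : Matrix (Fin n) (Fin n) R)
    (w : Fin n → R) (k : ℕ) :
    hornerLoop A (k • A + B) w (k + 1) =
      (((List.range (k + 1)).map (fun y => y • A + B)).prod).mulVec w := by
  induction k generalizing w with
  | zero =>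
      simp [hornerLoop, List.range_succ]
  | succ k ih =>
      have hM : (k + 1) • A + B - A = k • A + B := by
        rw [succ_nsmul]; abel
      have h1 : hornerLoop A ((k + 1) • A + B) w (k + 1 + 1) =
          hornerLoop A (k • A + B) (((k + 1) • A + B).mulVec w) (k + 1) := by
        simp only [hornerLoop, hM]
      rw [h1, ih]
      simp [List.range_succ, Matrix.mulVec_mulVec, mul_assoc]
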